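/- Let H(k,Δs,t) be as above with s>0, τ>0, α>0, 0 ≤ S < s, and 0 < R < τ. Then max over (k,Δs,t) ∈ [-1,1]×[−S,S]×[0,R] of H(k,Δs,t) equals max{ H(1,−S,R), H(−1,S,R), H(−1,−S,R), 0 }. -/
import Mathlib


noncomputable def H (s τ α k Δs t : ℝ) : ℝ :=
  (s + Δs) / (t ^ 2 + τ ^ 2 + 2 * t * τ * k) ^ (α / 2)
    + α * s * t * k / τ ^ (α + 1) - (s + Δs) / τ ^ α

lemma convexOn_rpow_neg {c : ℝ} (hc : 0 ≤ c) :
    ConvexOn ℝ (Set.Ioi (0:ℝ)) (fun x : ℝ => x ^ (-c)) := by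
  refine ⟨convex_Ioi _, ?_⟩
  intro x hx y hy a b ha hb hab
  obtain rfl : b = 1 - a := by linarith
  simp only [smul_eq_mul]
  have hx' : (0:ℝ) < x := hx
  have hy' : (0:ℝ) < y := hy
  have hcomb : 0 < a * x + (1-a) * y := by
    rcases eq_or_lt_of_le ha with h | h
    · rw [← h]; simpa using hy'
    · nlinarith
  have hlog : a * Real.log x + (1-a) * Real.log y ≤ Real.log (a * x + (1-a) * y) := by
    have := strictConcaveOn_log_Ioi.concaveOn.2 hx hy ha hb hab
    simpa [smul_eq_mul] using this
  rw [Real.rpow_def_of_pos hcomb, Real.rpow_def_of_pos hx', Real.rpow_def_of_pos hy']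
  calc Real.exp (Real.log (a*x+(1-a)*y) * (-c))
      ≤ Real.exp (a * (Real.log x * (-c)) + (1-a) * (Real.log y * (-c))) := by
        apply Real.exp_le_exp.2
        nlinarith [mul_le_mul_of_nonneg_right hlog hc]
    _ ≤ a * Real.exp (Real.log x * (-c)) + (1-a) * Real.exp (Real.log y * (-c)) := by
        have := convexOn_exp.2 (Set.mem_univ (Real.log x * (-c)))
          (Set.mem_univ (Real.log y * (-c))) ha hb hab
        simpa [smul_eq_mul] using this

lemma sq_rpow_half (x α : ℝ) (hx : 0 ≤ x) : (x^2 : ℝ) ^ (α/2) = x ^ α := by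
  rw [← Real.rpow_natCast x 2, ← Real.rpow_mul hx]
  congr 1
  ring

lemma convexOn_aux {c w A B L D u v : ℝ} (hc : 0 ≤ c) (hw : 0 ≤ w)
    (hpos : ∀ x ∈ Set.Icc u v, 0 < A + B * x) :
    ConvexOn ℝ (Set.Icc u v) (fun x => w * (A + B * x) ^ (-c) + (L * x + D)) := by
  refine ⟨convex_Icc _ _, ?_⟩
  intro x hx y hy a b ha hb hab
  obtain rfl : b = 1 - a := by linarith
  simp only [smul_eq_mul]
  have hX := hpos x hx
  have hY := hpos y hy
  have h1 := (convexOn_rpow_neg hc).2 (show A + B*x ∈ Set.Ioi (0:ℝ) from hX)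
    (show A + B*y ∈ Set.Ioi (0:ℝ) from hY) ha hb hab
  simp only [smul_eq_mul] at h1
  have e : A + B * (a*x + (1-a)*y) = a*(A+B*x) + (1-a)*(A+B*y) := by ring
  rw [e]
  have h2 := mul_le_mul_of_nonneg_left h1 hw
  nlinarith [h2]

lemma convex_le_max {φ : ℝ → ℝ} {u v x : ℝ} (huv : u ≤ v)
    (hφ : ConvexOn ℝ (Set.Icc u v) φ) (hx : x ∈ Set.Icc u v) :
    φ x ≤ max (φ u) (φ v) :=
  hφ.le_on_segment (Set.left_mem_Icc.2 huv) (Set.right_mem_Icc.2 huv)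
    (by rwa [segment_eq_Icc huv])

lemma H_zero (s τ α k Δs : ℝ) (hτ : 0 < τ) : H s τ α k Δs 0 = 0 := by
  simp only [H]
  rw [show (0:ℝ)^2 + τ^2 + 2*0*τ*k = τ^2 by ring, sq_rpow_half τ α hτ.le]
  ring

lemma H_one (s τ α Δs t : ℝ) (h : 0 < t + τ) :
    H s τ α 1 Δs t = (s+Δs) * ((t+τ) ^ α)⁻¹ + α*s*t/τ^(α+1) - (s+Δs)/τ^α := by
  simp only [H]
  rw [show t^2 + τ^2 + 2*t*τ*1 = (t+τ)^2 by ring, sq_rpow_half _ _ h.le]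
  ring

lemma H_negone (s τ α Δs t : ℝ) (h : 0 < τ - t) :
    H s τ α (-1) Δs t = (s+Δs) * ((τ-t) ^ α)⁻¹ - α*s*t/τ^(α+1) - (s+Δs)/τ^α := by
  simp only [H]
  rw [show t^2 + τ^2 + 2*t*τ*(-1) = (τ-t)^2 by ring, sq_rpow_half _ _ h.le]
  ring

theorem stmt_16 (s τ α S R : ℝ) (hs : 0 < s) (hτ : 0 < τ) (hα : 0 < α)
    (hS0 : 0 ≤ S) (hSs : S < s) (hR0 : 0 < R) (hRτ : R < τ) :
    IsGreatest
      {v : ℝ | ∃ k ∈ Set.Icc (-1 : ℝ) 1, ∃ Δs ∈ Set.Icc (-S) S,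
        ∃ t ∈ Set.Icc (0 : ℝ) R, v = H s τ α k Δs t}
      (max (max (H s τ α 1 (-S) R) (H s τ α (-1) S R))
           (max (H s τ α (-1) (-S) R) 0)) := by
  constructor
  · -- membership
    have m1 : H s τ α 1 (-S) R ∈ {v : ℝ | ∃ k ∈ Set.Icc (-1 : ℝ) 1, ∃ Δs ∈ Set.Icc (-S) S,
        ∃ t ∈ Set.Icc (0 : ℝ) R, v = H s τ α k Δs t} :=
      ⟨1, by norm_num, -S, ⟨le_rfl, by linarith⟩, R, ⟨hR0.le, le_rfl⟩, rfl⟩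
    have m2 : H s τ α (-1) S R ∈ {v : ℝ | ∃ k ∈ Set.Icc (-1 : ℝ) 1, ∃ Δs ∈ Set.Icc (-S) S,
        ∃ t ∈ Set.Icc (0 : ℝ) R, v = H s τ α k Δs t} :=
      ⟨-1, ⟨le_rfl, by norm_num⟩, S, ⟨by linarith, le_rfl⟩, R, ⟨hR0.le, le_rfl⟩, rfl⟩
    have m3 : H s τ α (-1) (-S) R ∈ {v : ℝ | ∃ k ∈ Set.Icc (-1 : ℝ) 1, ∃ Δs ∈ Set.Icc (-S) S,
        ∃ t ∈ Set.Icc (0 : ℝ) R, v = H s τ α k Δs t} :=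
      ⟨-1, ⟨le_rfl, by norm_num⟩, -S, ⟨le_rfl, by linarith⟩, R, ⟨hR0.le, le_rfl⟩, rfl⟩
    have m0 : (0:ℝ) ∈ {v : ℝ | ∃ k ∈ Set.Icc (-1 : ℝ) 1, ∃ Δs ∈ Set.Icc (-S) S,
        ∃ t ∈ Set.Icc (0 : ℝ) R, v = H s τ α k Δs t} :=
      ⟨1, by norm_num, 0, ⟨by linarith, hS0⟩, 0, ⟨le_rfl, hR0.le⟩, (H_zero s τ α 1 0 hτ).symm⟩
    rcases max_choice (max (H s τ α 1 (-S) R) (H s τ α (-1) S R))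
        (max (H s τ α (-1) (-S) R) 0) with h | h <;> rw [h]
    · rcases max_choice (H s τ α 1 (-S) R) (H s τ α (-1) S R) with h' | h' <;> rw [h']
      · exact m1
      · exact m2
    · rcases max_choice (H s τ α (-1) (-S) R) (0:ℝ) with h' | h' <;> rw [h']
      · exact m3
      · exact m0
  · rintro v ⟨k, hk, Δs, hΔs, t, ht, rfl⟩
    have hτα : (0:ℝ) < τ ^ α := Real.rpow_pos_of_pos hτ _
    have hw : 0 ≤ s + Δs := by have := hΔs.1; linarith
    have ht0 : 0 ≤ t := ht.1
    have htτ : t < τ := lt_of_le_of_lt ht.2 hRτ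
    -- k-direction convexity
    have hposk : ∀ x ∈ Set.Icc (-1:ℝ) 1, 0 < t^2 + τ^2 + 2*t*τ * x := by
      intro x hx
      have key : (2*t*τ)*(-1) ≤ (2*t*τ)*x := mul_le_mul_of_nonneg_left hx.1 (by positivity)
      have hsq : 0 < (τ-t)^2 := pow_pos (by linarith) 2
      nlinarith
    have hgconv := convexOn_aux (c := α/2) (w := s+Δs) (A := t^2+τ^2) (B := 2*t*τ)
      (L := α*s*t/τ^(α+1)) (D := -((s+Δs)/τ^α)) (u := -1) (v := 1) (by positivity) hw hposk
    have hHg : ∀ x, 0 < t^2 + τ^2 + 2*t*τ*x →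
        H s τ α x Δs t = (s+Δs) * (t^2 + τ^2 + 2*t*τ*x) ^ (-(α/2))
          + ((α*s*t/τ^(α+1))*x + -((s+Δs)/τ^α)) := by
      intro x hx
      simp only [H]
      rw [Real.rpow_neg hx.le]
      ring
    have step1 : H s τ α k Δs t ≤ max (H s τ α (-1) Δs t) (H s τ α 1 Δs t) := by
      rw [hHg k (hposk k hk), hHg (-1) (hposk (-1) (by norm_num)),
        hHg 1 (hposk 1 (by norm_num))]
      exact convex_le_max (by norm_num) hgconv hk
    -- t-direction, k = 1
    have hH1 : ∀ x ∈ Set.Icc (0:ℝ) R, H s τ α 1 Δs x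
        = (s+Δs) * (τ + 1*x) ^ (-α) + ((α*s/τ^(α+1))*x + -((s+Δs)/τ^α)) := by
      intro x hx
      rw [H_one s τ α Δs x (by linarith [hx.1]),
        Real.rpow_neg (by linarith [hx.1] : (0:ℝ) ≤ τ + 1*x),
        show τ + 1*x = x + τ by ring]
      ring
    have hconv1 := convexOn_aux (c := α) (w := s+Δs) (A := τ) (B := 1)
      (L := α*s/τ^(α+1)) (D := -((s+Δs)/τ^α)) (u := 0) (v := R) hα.le hw
      (by intro x hx; have := hx.1; nlinarith)
    have step2 : H s τ α 1 Δs t ≤ max 0 (H s τ α 1 Δs R) := by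
      have h := convex_le_max hR0.le hconv1 ht
      rw [← hH1 t ht, ← hH1 0 (Set.left_mem_Icc.2 hR0.le),
        ← hH1 R (Set.right_mem_Icc.2 hR0.le)] at h
      rwa [H_zero s τ α 1 Δs hτ] at h
    -- t-direction, k = -1
    have hH2 : ∀ x ∈ Set.Icc (0:ℝ) R, H s τ α (-1) Δs x
        = (s+Δs) * (τ + (-1)*x) ^ (-α) + ((-(α*s/τ^(α+1)))*x + -((s+Δs)/τ^α)) := by
      intro x hx
      have hx2 : x ≤ R := hx.2
      rw [H_negone s τ α Δs x (by linarith),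
        Real.rpow_neg (by linarith : (0:ℝ) ≤ τ + (-1)*x),
        show τ + (-1)*x = τ - x by ring]
      ring
    have hconv2 := convexOn_aux (c := α) (w := s+Δs) (A := τ) (B := -1)
      (L := -(α*s/τ^(α+1))) (D := -((s+Δs)/τ^α)) (u := 0) (v := R) hα.le hw
      (by intro x hx; have := hx.2; nlinarith)
    have step3 : H s τ α (-1) Δs t ≤ max 0 (H s τ α (-1) Δs R) := by
      have h := convex_le_max hR0.le hconv2 ht
      rw [← hH2 t ht, ← hH2 0 (Set.left_mem_Icc.2 hR0.le),
        ← hH2 R (Set.right_mem_Icc.2 hR0.le)] at h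
      rwa [H_zero s τ α (-1) Δs hτ] at h
    -- Δs-direction at (1, R)
    have hΔ1 : H s τ α 1 Δs R ≤ H s τ α 1 (-S) R := by
      rw [H_one _ _ _ _ _ (by linarith), H_one _ _ _ _ _ (by linarith)]
      have hbase : τ ^ α ≤ (R+τ)^α := Real.rpow_le_rpow hτ.le (by linarith) hα.le
      have hinv : ((R+τ)^α)⁻¹ ≤ (τ^α)⁻¹ := inv_anti₀ hτα hbase
      have hS' : 0 ≤ Δs + S := by linarith [hΔs.1]
      have key := mul_le_mul_of_nonneg_left hinv hS'
      simp only [div_eq_mul_inv]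
      nlinarith [key]
    -- Δs-direction at (-1, R)
    have hΔ2 : H s τ α (-1) Δs R ≤ H s τ α (-1) S R := by
      rw [H_negone _ _ _ _ _ (by linarith), H_negone _ _ _ _ _ (by linarith)]
      have hbase : (τ-R) ^ α ≤ τ^α := Real.rpow_le_rpow (by linarith) (by linarith) hα.le
      have hinv : (τ^α)⁻¹ ≤ ((τ-R)^α)⁻¹ :=
        inv_anti₀ (Real.rpow_pos_of_pos (by linarith) _) hbase
      have hS' : 0 ≤ S - Δs := by linarith [hΔs.2]
      have key := mul_le_mul_of_nonneg_left hinv hS'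
      simp only [div_eq_mul_inv]
      nlinarith [key]
    -- assemble
    set M := max (max (H s τ α 1 (-S) R) (H s τ α (-1) S R))
      (max (H s τ α (-1) (-S) R) 0) with hM
    have h0M : (0:ℝ) ≤ M := le_trans (le_max_right _ 0) (le_max_right _ _)
    have h1M : H s τ α 1 (-S) R ≤ M := le_trans (le_max_left _ _) (le_max_left _ _)
    have h2M : H s τ α (-1) S R ≤ M := le_trans (le_max_right _ _) (le_max_left _ _)
    refine le_trans step1 (max_le ?_ ?_)
    · exact le_trans step3 (max_le h0M (le_trans hΔ2 h2M))
    · exact le_trans step2 (max_le h0M (le_trans hΔ1 h1M))
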